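/- Let t ≥ 1 and let G be a P_4-free graph on n = 3t + 2 vertices. Then G has at most 3t + 1 edges, and G has exactly 3t + 1 edges if and only if G is isomorphic either to the disjoint union of t triangles and a single edge K_2, or, for some integer ℓ with 0 ≤ ℓ ≤ t−1, to the disjoint union of (t−ℓ−1) triangles and the star K_{1,3ℓ+4}. -/

import Mathlib

open SimpleGraph
open Finset

/-- `CopyIn H G` means `G` contains a subgraph isomorphic to `H`,
i.e. there is an injective graph homomorphism from `H` to `G`. -/
def CopyIn {α β : Type*} (H : SimpleGraph α) (G : SimpleGraph β) : Prop :=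
  ∃ f : α ↪ β, ∀ a b, H.Adj a b → G.Adj (f a) (f b)

/-- The Turán number `ex(n, H)`: the maximum number of edges in an
`H`-free graph on `n` vertices. -/
noncomputable def exNum {α : Type*} (n : ℕ) (H : SimpleGraph α) : ℕ :=
  sSup {m : ℕ | ∃ G : SimpleGraph (Fin n), ¬ CopyIn H G ∧ G.edgeSet.ncard = m}

/-- The odd prism `C_{2k+1} □ P_2`. -/
def oddPrism (k : ℕ) : SimpleGraph (Fin (2 * k + 1) × Fin 2) :=
  cycleGraph (2 * k + 1) □ pathGraph 2

/-- The disjoint union of `t` triangles: the graph on `Fin t × Fin 3` in which two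
distinct vertices are adjacent iff they lie in the same triangle. -/
def triangleUnion (t : ℕ) : SimpleGraph (Fin t × Fin 3) :=
  SimpleGraph.fromRel (fun x y => x.1 = y.1)

/-- The star `K_{1,m}`: vertex `0` is the center, joined to the `m` leaves. -/
def starGraph (m : ℕ) : SimpleGraph (Fin (m + 1)) :=
  SimpleGraph.fromRel (fun i _ => i = 0)

variable {V : Type*} {G : SimpleGraph V}

lemma P4free_adj (hfree : ¬ CopyIn (pathGraph 4) G) :
    ∀ a b c d : V, G.Adj a b → G.Adj b c → G.Adj c d → a = c ∨ a = d ∨ b = d := by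
  intro a b c d hab hbc hcd
  by_contra h
  push_neg at h
  obtain ⟨hac, had, hbd⟩ := h
  apply hfree
  refine ⟨⟨![a,b,c,d], ?_⟩, ?_⟩
  · intro i j hij
    fin_cases i <;> fin_cases j <;>
      simp_all [hab.ne, hbc.ne, hcd.ne, hab.ne', hbc.ne', hcd.ne'] <;> omega
  · intro i j hij
    rw [pathGraph_adj] at hij
    fin_cases i <;> fin_cases j <;> simp_all <;>
      first | exact hab.symm | exact hbc.symm | exact hcd.symm | exact hab | exact hbc | exact hcd



lemma reach_of_P4free
    (hP4 : ∀ a b c d : V, G.Adj a b → G.Adj b c → G.Adj c d → a = c ∨ a = d ∨ b = d)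
    {u v : V} (h : G.Reachable u v) :
    u = v ∨ G.Adj u v ∨ ∃ w, G.Adj u w ∧ G.Adj w v := by
  obtain ⟨p⟩ := h
  induction p with
  | nil => exact Or.inl rfl
  | cons hux p ih =>
    rename_i u x v
    rcases ih with rfl | hxv | ⟨w, hxw, hwv⟩
    · exact Or.inr (Or.inl hux)
    · by_cases huv : u = v
      · exact Or.inl huv
      · exact Or.inr (Or.inr ⟨x, hux, hxv⟩)
    · rcases hP4 u x w v hux hxw hwv with rfl | rfl | rfl
      · exact Or.inr (Or.inl hwv)
      · exact Or.inl rfl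
      · exact Or.inr (Or.inl hux)

/-- In a star component with center `c₀` and pendant leaf `w₀`. -/
lemma star_comp
    (hP4 : ∀ a b c d : V, G.Adj a b → G.Adj b c → G.Adj c d → a = c ∨ a = d ∨ b = d)
    {c₀ w₀ : V} (hc : G.Adj c₀ w₀) (Hpend : ∀ b, G.Adj w₀ b → b = c₀) :
    (G.connectedComponentMk c₀).supp = insert c₀ (G.neighborSet c₀) ∧
      ∀ u w, G.Adj u w → u ∈ (G.connectedComponentMk c₀).supp → u = c₀ ∨ w = c₀ := by
  have claim1 : ∀ z ∈ (G.connectedComponentMk c₀).supp, z = c₀ ∨ G.Adj c₀ z := by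
    intro z hz
    rw [ConnectedComponent.mem_supp_iff, ConnectedComponent.eq] at hz
    rcases reach_of_P4free hP4 hz.symm with rfl | h | ⟨y, hy, hyz⟩
    · exact Or.inl rfl
    · exact Or.inr h
    · rcases hP4 w₀ c₀ y z hc.symm hy hyz with rfl | rfl | rfl
      · exact Or.inl (Hpend z hyz)
      · exact Or.inr hc
      · exact Or.inl rfl
  constructor
  · ext z
    simp only [Set.mem_insert_iff, mem_neighborSet]
    constructor
    · intro hz
      rcases claim1 z hz with rfl | h
      · exact Or.inl rfl
      · exact Or.inr h
    · rintro (rfl | h)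
      · exact ConnectedComponent.mem_supp_iff _ _ |>.2 rfl
      · rw [ConnectedComponent.mem_supp_iff, ConnectedComponent.eq]
        exact h.symm.reachable
  · intro u w huw hu
    have hwsupp : w ∈ (G.connectedComponentMk c₀).supp := by
      rw [ConnectedComponent.mem_supp_iff] at hu ⊢
      rw [← hu, ConnectedComponent.eq]
      exact huw.symm.reachable
    rcases claim1 u hu with rfl | hcu
    · exact Or.inl rfl
    rcases claim1 w hwsupp with rfl | hcw
    · exact Or.inr rfl
    rcases hP4 w₀ c₀ u w hc.symm hcu huw with rfl | rfl | rfl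
    · exact Or.inr (Hpend w huw)
    · exact Or.inl (Hpend u huw.symm)
    · exact Or.inr rfl

lemma comp_classify
    (hP4 : ∀ a b c d : V, G.Adj a b → G.Adj b c → G.Adj c d → a = c ∨ a = d ∨ b = d)
    (c : G.ConnectedComponent) :
    (∃ a b d, G.Adj a b ∧ G.Adj b d ∧ G.Adj a d ∧ c.supp = {a, b, d}) ∨
    (∃ v, c.supp = insert v (G.neighborSet v) ∧
      ∀ u w, G.Adj u w → u ∈ c.supp → u = v ∨ w = v) := by
  obtain ⟨u₀, rfl⟩ := c.exists_rep
  have hmk : Quot.mk G.Reachable u₀ = G.connectedComponentMk u₀ := rfl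
  rw [hmk]
  by_cases hE : ∃ x, G.Adj u₀ x
  · obtain ⟨v₀, h0⟩ := hE
    by_cases htri : ∃ w, G.Adj u₀ w ∧ G.Adj v₀ w
    · obtain ⟨w₀, hw1, hw2⟩ := htri
      left
      refine ⟨u₀, v₀, w₀, h0, hw2, hw1, ?_⟩
      have hclosed : ∀ y z, y ∈ ({u₀, v₀, w₀} : Set V) → G.Adj y z →
          z ∈ ({u₀, v₀, w₀} : Set V) := by
        rintro y z (rfl | rfl | rfl) hyz
        · rcases hP4 z y v₀ w₀ hyz.symm h0 hw2 with rfl | rfl | rfl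
          · exact Or.inr (Or.inl rfl)
          · exact Or.inr (Or.inr rfl)
          · exact absurd hw1 (G.irrefl)
        · rcases hP4 z y u₀ w₀ hyz.symm h0.symm hw1 with rfl | rfl | rfl
          · exact Or.inl rfl
          · exact Or.inr (Or.inr rfl)
          · exact absurd hw2 (G.irrefl)
        · rcases hP4 z y u₀ v₀ hyz.symm hw1.symm h0 with rfl | rfl | rfl
          · exact Or.inl rfl
          · exact Or.inr (Or.inl rfl)
          · exact absurd hw2.symm (G.irrefl)
      ext z
      constructor
      · intro hz
        rw [ConnectedComponent.mem_supp_iff, ConnectedComponent.eq] at hz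
        rcases reach_of_P4free hP4 hz.symm with rfl | h | ⟨y, hy, hyz⟩
        · exact Or.inl rfl
        · exact hclosed u₀ z (Or.inl rfl) h
        · exact hclosed y z (hclosed u₀ y (Or.inl rfl) hy) hyz
      · rintro (rfl | rfl | rfl)
        · exact ConnectedComponent.mem_supp_iff _ _ |>.2 rfl
        · rw [ConnectedComponent.mem_supp_iff, ConnectedComponent.eq]
          exact h0.symm.reachable
        · rw [ConnectedComponent.mem_supp_iff, ConnectedComponent.eq]
          exact hw1.symm.reachable
    · right
      by_cases hcen : ∃ a, a ≠ v₀ ∧ G.Adj u₀ a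
      · -- center u₀, pendant v₀
        have Hpend : ∀ b, G.Adj v₀ b → b = u₀ := by
          intro b hb
          by_contra hbu
          obtain ⟨a, ha1, ha2⟩ := hcen
          rcases hP4 a u₀ v₀ b ha2.symm h0 hb with rfl | rfl | rfl
          · exact ha1 rfl
          · exact htri ⟨a, ha2, hb⟩
          · exact hbu rfl
        exact ⟨u₀, star_comp hP4 h0 Hpend⟩
      · -- center v₀, pendant u₀
        push_neg at hcen
        have Hpend : ∀ b, G.Adj u₀ b → b = v₀ := by
          intro b hb
          by_contra hbv
          exact hcen b hbv hb
        have hkey := star_comp hP4 h0.symm Hpend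
        have : G.connectedComponentMk u₀ = G.connectedComponentMk v₀ :=
          ConnectedComponent.eq.2 h0.reachable
        rw [this]
        exact ⟨v₀, hkey⟩
  · right
    push_neg at hE
    refine ⟨u₀, ?_, ?_⟩
    · have hN : G.neighborSet u₀ = ∅ := by
        ext x; simp [hE x]
      rw [hN]
      ext z
      simp only [Set.mem_insert_iff, Set.mem_empty_iff_false, or_false]
      constructor
      · intro hz
        rw [ConnectedComponent.mem_supp_iff, ConnectedComponent.eq] at hz
        rcases reach_of_P4free hP4 hz.symm with rfl | h | ⟨y, hy, _⟩
        · rfl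
        · exact absurd h (hE z)
        · exact absurd hy (hE y)
      · rintro rfl
        exact ConnectedComponent.mem_supp_iff _ _ |>.2 rfl
    · intro u w huw hu
      rw [ConnectedComponent.mem_supp_iff, ConnectedComponent.eq] at hu
      rcases reach_of_P4free hP4 hu.symm with rfl | h | ⟨y, hy, _⟩
      · exact Or.inl rfl
      · exact absurd h (hE u)
      · exact absurd hy (hE y)



variable {α β : Type*} [Fintype α] [Fintype β]

open Finset in
lemma degree_sum_inl (G : SimpleGraph α) (H : SimpleGraph β) [DecidableRel G.Adj]
    [DecidableRel (G ⊕g H).Adj] (a : α) : (G ⊕g H).degree (Sum.inl a) = G.degree a := by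
  rw [← card_neighborSet_eq_degree, ← card_neighborSet_eq_degree]
  apply Fintype.card_congr
  refine ⟨fun x => ⟨?_, ?_⟩, fun b => ⟨Sum.inl b.1, b.2⟩, ?_, ?_⟩
  · exact x.1.elim id (fun _ => a)
  · obtain ⟨(b | b), hb⟩ := x
    · exact hb
    · simp [mem_neighborSet] at hb
  · rintro ⟨(b | b), hb⟩
    · rfl
    · simp [mem_neighborSet] at hb
  · rintro ⟨b, hb⟩; rfl

open Finset in
lemma degree_sum_inr (G : SimpleGraph α) (H : SimpleGraph β) [DecidableRel H.Adj]
    [DecidableRel (G ⊕g H).Adj] (b : β) : (G ⊕g H).degree (Sum.inr b) = H.degree b := by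
  rw [← card_neighborSet_eq_degree, ← card_neighborSet_eq_degree]
  apply Fintype.card_congr
  refine ⟨fun x => ⟨?_, ?_⟩, fun c => ⟨Sum.inr c.1, c.2⟩, ?_, ?_⟩
  · exact x.1.elim (fun _ => b) id
  · obtain ⟨(c | c), hc⟩ := x
    · simp [mem_neighborSet] at hc
    · exact hc
  · rintro ⟨(c | c), hc⟩
    · simp [mem_neighborSet] at hc
    · rfl
  · rintro ⟨c, hc⟩; rfl

lemma triangleUnion_adj {t : ℕ} {p q : Fin t × Fin 3} :
    (triangleUnion t).Adj p q ↔ p ≠ q ∧ p.1 = q.1 := by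
  simp only [triangleUnion, fromRel_adj]
  constructor
  · rintro ⟨h1, (h2 | h2)⟩
    · exact ⟨h1, h2⟩
    · exact ⟨h1, h2.symm⟩
  · rintro ⟨h1, h2⟩; exact ⟨h1, Or.inl h2⟩

lemma starGraph_adj {m : ℕ} {i j : Fin (m+1)} :
    (_root_.starGraph m).Adj i j ↔ i ≠ j ∧ (i = 0 ∨ j = 0) := by
  simp only [_root_.starGraph, fromRel_adj]

lemma triangleUnion_degree {t : ℕ} (p : Fin t × Fin 3) [DecidableRel (triangleUnion t).Adj] :
    (triangleUnion t).degree p = 2 := by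
  rw [← card_neighborSet_eq_degree]
  have : Fintype.card {j : Fin 3 // j ≠ p.2} = 2 := by
    rw [Fintype.card_subtype_compl]; simp
  rw [← this]
  apply Fintype.card_congr
  refine ⟨fun x => ⟨x.1.2, ?_⟩, fun j => ⟨(p.1, j.1), ?_⟩, ?_, ?_⟩
  · obtain ⟨q, hq⟩ := x
    rw [mem_neighborSet, triangleUnion_adj] at hq
    intro h
    exact hq.1 (Prod.ext hq.2.symm h).symm
  · rw [mem_neighborSet, triangleUnion_adj]
    exact ⟨fun h => j.2 (congrArg Prod.snd h).symm, rfl⟩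
  · rintro ⟨⟨q1, q2⟩, hq⟩
    rw [mem_neighborSet, triangleUnion_adj] at hq
    simp only [Subtype.mk.injEq]
    exact Prod.ext hq.2 rfl
  · rintro ⟨j, hj⟩; rfl

lemma starGraph_degree_zero {m : ℕ} [DecidableRel (_root_.starGraph m).Adj] :
    (_root_.starGraph m).degree (0 : Fin (m+1)) = m := by
  rw [← card_neighborSet_eq_degree]
  have h : ∀ j, j ∈ (_root_.starGraph m).neighborSet (0 : Fin (m+1)) ↔ j ≠ 0 := by
    intro j
    rw [mem_neighborSet, _root_.starGraph_adj]
    constructor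
    · rintro ⟨h1, _⟩; exact fun h => h1 h.symm
    · intro h; exact ⟨fun h' => h h'.symm, Or.inl rfl⟩
  have : Fintype.card {j : Fin (m+1) // j ≠ 0} = m := by
    rw [Fintype.card_subtype_compl]; simp
  exact (Fintype.card_congr (Equiv.subtypeEquivRight h)).trans this

lemma starGraph_degree_ne_zero {m : ℕ} (i : Fin (m+1)) (hi : i ≠ 0)
    [DecidableRel (_root_.starGraph m).Adj] : (_root_.starGraph m).degree i = 1 := by
  rw [← card_neighborSet_eq_degree]
  have : (_root_.starGraph m).neighborSet i = {0} := by
    ext j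
    simp only [mem_neighborSet, _root_.starGraph_adj, Set.mem_singleton_iff]
    constructor
    · rintro ⟨h1, (h2 | h2)⟩
      · exact absurd h2 hi
      · exact h2
    · rintro rfl; exact ⟨hi, Or.inr rfl⟩
  have h : ∀ j, j ∈ (_root_.starGraph m).neighborSet i ↔ j ∈ ({0} : Set (Fin (m+1))) := by
    intro j; rw [this]
  calc Fintype.card ↑((_root_.starGraph m).neighborSet i)
      = Fintype.card ({0} : Set (Fin (m+1))) := Fintype.card_congr (Equiv.setCongr this)
    _ = 1 := by simp

lemma ncard_edges_TU_star (k m : ℕ) :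
    (triangleUnion k ⊕g _root_.starGraph m).edgeSet.ncard = 3 * k + m := by
  classical
  rw [Set.ncard_eq_toFinset_card']
  have hds := (triangleUnion k ⊕g _root_.starGraph m).sum_degrees_eq_twice_card_edges
  rw [Fintype.sum_sum_type] at hds
  have h1 : ∑ p : Fin k × Fin 3, (triangleUnion k ⊕g _root_.starGraph m).degree (Sum.inl p)
      = 6 * k := by
    have : ∀ p : Fin k × Fin 3, (triangleUnion k ⊕g _root_.starGraph m).degree (Sum.inl p) = 2 := by
      intro p; convert (degree_sum_inl _ _ p).trans (triangleUnion_degree p) <;> infer_instance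
    rw [Finset.sum_congr rfl (fun p _ => this p)]
    simp [Finset.card_univ, mul_comm]; ring
  have h2 : ∑ i : Fin (m+1), (triangleUnion k ⊕g _root_.starGraph m).degree (Sum.inr i)
      = 2 * m := by
    have hz : ∀ i : Fin (m+1), (triangleUnion k ⊕g _root_.starGraph m).degree (Sum.inr i)
        = (_root_.starGraph m).degree i := fun i => by convert degree_sum_inr _ _ i <;> infer_instance
    rw [Finset.sum_congr rfl (fun i _ => hz i), Fin.sum_univ_succ, starGraph_degree_zero]
    have : ∀ i : Fin m, (_root_.starGraph m).degree i.succ = 1 := fun i =>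
      starGraph_degree_ne_zero _ (Fin.succ_ne_zero i)
    rw [Finset.sum_congr rfl (fun i _ => this i)]
    simp; ring
  replace hds : 6 * k + 2 * m = 2 * (triangleUnion k ⊕g _root_.starGraph m).edgeFinset.card := by
    rw [← h1, ← h2]; convert hds
  have : (triangleUnion k ⊕g _root_.starGraph m).edgeFinset.card =
      (triangleUnion k ⊕g _root_.starGraph m).edgeSet.toFinset.card := rfl
  omega

lemma ncard_edges_TU_K2 (t : ℕ) :
    (triangleUnion t ⊕g (⊤ : SimpleGraph (Fin 2))).edgeSet.ncard = 3 * t + 1 := by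
  classical
  rw [Set.ncard_eq_toFinset_card']
  have hds := (triangleUnion t ⊕g (⊤ : SimpleGraph (Fin 2))).sum_degrees_eq_twice_card_edges
  rw [Fintype.sum_sum_type] at hds
  have h1 : ∑ p : Fin t × Fin 3, (triangleUnion t ⊕g (⊤ : SimpleGraph (Fin 2))).degree (Sum.inl p)
      = 6 * t := by
    have : ∀ p : Fin t × Fin 3,
        (triangleUnion t ⊕g (⊤ : SimpleGraph (Fin 2))).degree (Sum.inl p) = 2 := by
      intro p; convert (degree_sum_inl _ _ p).trans (triangleUnion_degree p) <;> infer_instance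
    rw [Finset.sum_congr rfl (fun p _ => this p)]
    simp [Finset.card_univ, mul_comm]; ring
  have h2 : ∑ i : Fin 2, (triangleUnion t ⊕g (⊤ : SimpleGraph (Fin 2))).degree (Sum.inr i)
      = 2 := by
    have hz : ∀ i : Fin 2, (triangleUnion t ⊕g (⊤ : SimpleGraph (Fin 2))).degree (Sum.inr i)
        = (⊤ : SimpleGraph (Fin 2)).degree i := fun i => by convert degree_sum_inr _ _ i <;> infer_instance
    rw [Finset.sum_congr rfl (fun i _ => hz i)]
    have : ∀ i : Fin 2, (⊤ : SimpleGraph (Fin 2)).degree i = 1 := by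
      intro i; rw [complete_graph_degree]; rfl
    rw [Finset.sum_congr rfl (fun i _ => this i)]
    simp
  replace hds : 6 * t + 2 = 2 * (triangleUnion t ⊕g (⊤ : SimpleGraph (Fin 2))).edgeFinset.card := by
    rw [← h1, ← h2]; convert hds
  have : (triangleUnion t ⊕g (⊤ : SimpleGraph (Fin 2))).edgeFinset.card =
      (triangleUnion t ⊕g (⊤ : SimpleGraph (Fin 2))).edgeSet.toFinset.card := rfl
  omega

def IsTriComp (G : SimpleGraph V) (c : G.ConnectedComponent) : Prop :=
  ∃ a b d, G.Adj a b ∧ G.Adj b d ∧ G.Adj a d ∧ c.supp = {a, b, d}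

lemma tri_neighborFinset [Fintype V] [DecidableEq V] [DecidableRel G.Adj]
    {c : G.ConnectedComponent} {a b d : V}
    (hab : G.Adj a b) (hbd : G.Adj b d) (had : G.Adj a d)
    (hsupp : c.supp = {a, b, d}) :
    G.neighborFinset a = {b, d} ∧ G.neighborFinset b = {a, d} ∧
      G.neighborFinset d = {a, b} := by
  have hmem : ∀ x ∈ ({a, b, d} : Set V), G.connectedComponentMk x = c := by
    intro x hx; rw [← ConnectedComponent.mem_supp_iff, hsupp]; exact hx
  have key : ∀ x y : V, x ∈ ({a, b, d} : Set V) → G.Adj x y → y ∈ ({a, b, d} : Set V) := by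
    intro x y hx hxy
    rw [← hsupp, ConnectedComponent.mem_supp_iff]
    rw [← hmem x hx, ConnectedComponent.eq]
    exact hxy.symm.reachable
  refine ⟨?_, ?_, ?_⟩
  · ext y
    simp only [mem_neighborFinset, Finset.mem_insert, Finset.mem_singleton]
    constructor
    · intro hy
      rcases key a y (by left; rfl) hy with h | h | h
      · exact absurd (h ▸ hy) (G.irrefl)
      · exact Or.inl h
      · exact Or.inr h
    · rintro (rfl | rfl)
      · exact hab
      · exact had
  · ext y
    simp only [mem_neighborFinset, Finset.mem_insert, Finset.mem_singleton]
    constructor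
    · intro hy
      rcases key b y (by right; left; rfl) hy with h | h | h
      · exact Or.inl h
      · exact absurd (h ▸ hy) (G.irrefl)
      · exact Or.inr h
    · rintro (rfl | rfl)
      · exact hab.symm
      · exact hbd
  · ext y
    simp only [mem_neighborFinset, Finset.mem_insert, Finset.mem_singleton]
    constructor
    · intro hy
      rcases key d y (by right; right; rfl) hy with h | h | h
      · exact Or.inl h
      · exact Or.inr h
      · exact absurd (h ▸ hy) (G.irrefl)
    · rintro (rfl | rfl)
      · exact had.symm
      · exact hbd.symm

lemma comp_sum_deg [Fintype V] [DecidableEq V] [DecidableRel G.Adj]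
    [DecidableEq G.ConnectedComponent] [DecidablePred (IsTriComp G)]
    (hP4 : ∀ a b c d : V, G.Adj a b → G.Adj b c → G.Adj c d → a = c ∨ a = d ∨ b = d)
    (c : G.ConnectedComponent) :
    (∑ v ∈ univ.filter (fun v => G.connectedComponentMk v = c), G.degree v)
      + 2 * (if IsTriComp G c then 0 else 1)
      = 2 * (univ.filter (fun v => G.connectedComponentMk v = c)).card := by
  have hfil : univ.filter (fun v => G.connectedComponentMk v = c) = c.supp.toFinset := by
    ext v; simp [ConnectedComponent.mem_supp_iff]
  by_cases hTri : IsTriComp G c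
  · obtain ⟨a, b, d, hab, hbd, had, hsupp⟩ := hTri
    obtain ⟨hna, hnb, hnd⟩ := tri_neighborFinset hab hbd had hsupp
    have hTri' : IsTriComp G c := ⟨a, b, d, hab, hbd, had, hsupp⟩
    rw [if_pos hTri']
    have habd : c.supp.toFinset = ({a, b, d} : Finset V) := by
      ext x
      rw [Set.mem_toFinset, hsupp]
      simp
    rw [hfil, habd]
    have hab' : a ≠ b := hab.ne
    have hbd' : b ≠ d := hbd.ne
    have had' : a ≠ d := had.ne
    rw [Finset.sum_insert (by simp [hab', had']), Finset.sum_insert (by simp [hbd']),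
      Finset.sum_singleton]
    rw [Finset.card_insert_of_notMem (by simp [hab', had']),
      Finset.card_insert_of_notMem (by simp [hbd']), Finset.card_singleton]
    have da : G.degree a = 2 := by rw [degree, hna]; simp [hbd.ne]
    have db : G.degree b = 2 := by rw [degree, hnb]; simp [had.ne]
    have dd : G.degree d = 2 := by rw [degree, hnd]; simp [hab.ne]
    omega
  · rcases comp_classify hP4 c with hA | ⟨v, hsupp, hinc⟩
    · exact absurd hA hTri
    simp only [if_neg hTri]
    have hvc : G.connectedComponentMk v = c := by
      rw [← ConnectedComponent.mem_supp_iff, hsupp]; exact Set.mem_insert _ _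
    have hsupp' : c.supp.toFinset = insert v (G.neighborFinset v) := by
      ext x
      rw [Set.mem_toFinset, hsupp]
      simp [mem_neighborFinset]
    have hleaf : ∀ x ∈ G.neighborFinset v, G.neighborFinset x = {v} := by
      intro x hx
      rw [mem_neighborFinset] at hx
      ext y
      simp only [mem_neighborFinset, Finset.mem_singleton]
      constructor
      · intro hy
        have hxs : x ∈ c.supp := by rw [hsupp]; exact Set.mem_insert_of_mem _ hx
        rcases hinc x y hy hxs with rfl | rfl
        · exact absurd hx (G.irrefl)
        · rfl
      · rintro rfl; exact hx.symm
    rw [hfil, hsupp']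
    have hv : v ∉ G.neighborFinset v := by simp
    rw [Finset.sum_insert hv, Finset.card_insert_of_notMem hv]
    have hsum : ∑ x ∈ G.neighborFinset v, G.degree x = G.degree v := by
      rw [Finset.sum_congr rfl (fun x hx => by rw [degree, hleaf x hx, Finset.card_singleton])]
      rw [Finset.sum_const, smul_eq_mul, mul_one, degree]
    rw [hsum]
    rw [degree]
    omega

lemma count_P4free [Fintype V] (G : SimpleGraph V)
    (hP4 : ∀ a b c d : V, G.Adj a b → G.Adj b c → G.Adj c d → a = c ∨ a = d ∨ b = d) :
    G.edgeSet.ncard + Nat.card {c : G.ConnectedComponent // ¬ IsTriComp G c}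
      = Fintype.card V := by
  classical
  letI : Fintype G.ConnectedComponent := Fintype.ofFinite _
  rw [Set.ncard_eq_toFinset_card']
  have hcardE : G.edgeSet.toFinset.card = G.edgeFinset.card := rfl
  have hds := G.sum_degrees_eq_twice_card_edges
  have hfib := Finset.sum_fiberwise (univ : Finset V)
    (fun v => G.connectedComponentMk v) (fun v => G.degree v)
  have hcards := Finset.sum_fiberwise (univ : Finset V)
    (fun v => G.connectedComponentMk v) (fun _ => 1)
  simp only [Finset.sum_const, smul_eq_mul, mul_one] at hcards
  have hcV : ∑ c : G.ConnectedComponent,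
      (univ.filter (fun v => G.connectedComponentMk v = c)).card = Fintype.card V := by
    rw [← Finset.card_univ, ← hcards]
  have hsum := Finset.sum_congr rfl (fun c (_ : c ∈ (univ : Finset G.ConnectedComponent)) =>
    comp_sum_deg hP4 c)
  rw [Finset.sum_add_distrib] at hsum
  rw [hfib, hds] at hsum
  rw [← Finset.mul_sum, ← Finset.mul_sum] at hsum
  rw [hcV] at hsum
  have hNat : Nat.card {c : G.ConnectedComponent // ¬ IsTriComp G c}
      = ∑ c : G.ConnectedComponent, (if IsTriComp G c then 0 else 1) := by
    rw [Nat.card_eq_fintype_card, Fintype.card_subtype]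
    rw [Finset.card_eq_sum_ones, Finset.sum_filter]
    exact Finset.sum_congr rfl (fun c _ => by by_cases h : IsTriComp G c <;> simp [h])
  rw [hNat]
  omega

lemma starGraph_one_eq_top : _root_.starGraph 1 = (⊤ : SimpleGraph (Fin 2)) := by
  ext i j
  simp only [_root_.starGraph, fromRel_adj, top_adj]
  constructor
  · rintro ⟨h, _⟩; exact h
  · intro h
    refine ⟨h, ?_⟩
    fin_cases i <;> fin_cases j <;> simp_all

lemma card_supp_tri {c : G.ConnectedComponent}
    (h : IsTriComp G c) : c.supp.ncard = 3 := by
  obtain ⟨a, b, d, hab, hbd, had, hsupp⟩ := h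
  exact Set.ncard_eq_three.mpr ⟨a, b, d, hab.ne, had.ne, hbd.ne, hsupp⟩

lemma tri_adj {c : G.ConnectedComponent} {a b d : V}
    (hab : G.Adj a b) (hbd : G.Adj b d) (had : G.Adj a d)
    (hsupp : c.supp = {a, b, d}) {x y : V} (hx : x ∈ c.supp) (hy : y ∈ c.supp)
    (hxy : x ≠ y) : G.Adj x y := by
  rw [hsupp] at hx hy
  rcases hx with rfl | rfl | rfl <;> rcases hy with rfl | rfl | rfl <;>
    first
      | exact absurd rfl hxy
      | assumption
      | exact hab.symm
      | exact hbd.symm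
      | exact had.symm

lemma card_V_eq_sum [Fintype V] [DecidableEq G.ConnectedComponent]
    [Fintype G.ConnectedComponent] :
    Fintype.card V = ∑ c : G.ConnectedComponent,
      (univ.filter (fun v => G.connectedComponentMk v = c)).card := by
  have hcards := Finset.sum_fiberwise (univ : Finset V)
    (fun v => G.connectedComponentMk v) (fun _ => 1)
  simp only [Finset.sum_const, smul_eq_mul, mul_one] at hcards
  rw [← Finset.card_univ, ← hcards]

lemma ncard_eq_of_iso [Fintype V] {W : Type*} [Fintype W] {H : SimpleGraph W}
    (f : G ≃g H) : G.edgeSet.ncard = H.edgeSet.ncard := by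
  classical
  rw [Set.ncard_eq_toFinset_card', Set.ncard_eq_toFinset_card']
  exact f.card_edgeFinset_eq
section ISO
variable {V : Type*}

lemma iso_structure [Fintype V] (G : SimpleGraph V)
    (hP4 : ∀ a b c d : V, G.Adj a b → G.Adj b c → G.Adj c d → a = c ∨ a = d ∨ b = d)
    (cs : G.ConnectedComponent) (hstar : ¬ IsTriComp G cs)
    (hothers : ∀ c, c ≠ cs → IsTriComp G c) :
    ∃ k m : ℕ, Fintype.card V = 3 * k + (m + 1) ∧
      Nonempty (G ≃g (triangleUnion k ⊕g _root_.starGraph m)) := by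
  classical
  letI : Fintype G.ConnectedComponent := Fintype.ofFinite _
  obtain ⟨v, hsupp, hinc⟩ : ∃ v, cs.supp = insert v (G.neighborSet v) ∧
      ∀ u w, G.Adj u w → u ∈ cs.supp → u = v ∨ w = v := by
    rcases comp_classify hP4 cs with hA | hB
    · exact absurd hA hstar
    · exact hB
  set m := G.degree v with hm
  set T : Set V := {x | G.connectedComponentMk x ≠ cs} with hTdef
  have hTc : Tᶜ = cs.supp := by
    ext x
    simp [hTdef, ConnectedComponent.mem_supp_iff]
  have hvs : v ∈ cs.supp := by rw [hsupp]; exact Set.mem_insert _ _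
  -- star side equivalence
  have hcardS : Fintype.card cs.supp = m + 1 := by
    rw [← Set.toFinset_card]
    have h1 : cs.supp.toFinset = insert v (G.neighborFinset v) := by
      ext x
      rw [Set.mem_toFinset, hsupp]
      simp [mem_neighborFinset]
    rw [h1, Finset.card_insert_of_notMem (by simp), hm]
    rfl
  set q : ↥cs.supp ≃ Fin (m+1) := Fintype.equivFinOfCardEq hcardS with hq
  set e₂ : ↥cs.supp ≃ Fin (m+1) := q.trans (Equiv.swap (q ⟨v, hvs⟩) 0) with he₂
  have P2 : ∀ x : ↥cs.supp, e₂ x = 0 ↔ (x : V) = v := by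
    intro x
    have hv0 : e₂ ⟨v, hvs⟩ = 0 := by
      rw [he₂]; simp [Equiv.swap_apply_left]
    constructor
    · intro hx
      have : e₂ x = e₂ ⟨v, hvs⟩ := by rw [hx, hv0]
      have := e₂.injective this
      exact congrArg Subtype.val this
    · intro hx
      have : x = ⟨v, hvs⟩ := Subtype.ext hx
      rw [this, hv0]
  -- triangle side
  set Γ' := {c : G.ConnectedComponent // c ≠ cs} with hΓ'
  set k := Fintype.card Γ' with hk
  set hΓ : Γ' ≃ Fin k := Fintype.equivFin Γ' with hhΓ
  set fT : ↥T → Γ' := fun x => ⟨G.connectedComponentMk x.1, x.2⟩ with hfT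
  have fiberEquiv : ∀ c : Γ', {x : ↥T // fT x = c} ≃ ↥(c.1.supp) := by
    intro c
    refine ⟨fun x => ⟨x.1.1, ?_⟩, fun y => ⟨⟨y.1, ?_⟩, ?_⟩, ?_, ?_⟩
    · have := congrArg Subtype.val x.2
      exact (ConnectedComponent.mem_supp_iff _ _).2 this
    · show G.connectedComponentMk y.1 ≠ cs
      rw [(ConnectedComponent.mem_supp_iff _ _).1 y.2]
      exact c.2
    · exact Subtype.ext ((ConnectedComponent.mem_supp_iff _ _).1 y.2)
    · intro x; rfl
    · intro y; rfl
  have hfib3 : ∀ c : Γ', Fintype.card {x : ↥T // fT x = c} = 3 := by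
    intro c
    rw [Fintype.card_congr (fiberEquiv c)]
    rw [← Nat.card_eq_fintype_card, Nat.card_coe_set_eq]
    exact card_supp_tri (hothers c.1 c.2)
  set fEq : ∀ c : Γ', {x : ↥T // fT x = c} ≃ Fin 3 :=
    fun c => Fintype.equivFinOfCardEq (hfib3 c) with hfEq
  set e₁ : ↥T ≃ Fin k × Fin 3 :=
    (Equiv.sigmaFiberEquiv fT).symm.trans ((Equiv.sigmaCongrRight fEq).trans
      ((Equiv.sigmaEquivProd Γ' (Fin 3)).trans (Equiv.prodCongr hΓ (Equiv.refl (Fin 3)))))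
    with he₁
  have P1 : ∀ x : ↥T, (e₁ x).1 = hΓ (fT x) := fun x => rfl
  -- global equivalence
  set Φ : V ≃ (Fin k × Fin 3) ⊕ Fin (m+1) :=
    (Equiv.Set.sumCompl T).symm.trans (Equiv.sumCongr e₁ ((Equiv.setCongr hTc).trans e₂))
    with hΦ
  have hΦinl : ∀ (a : V) (ha : a ∈ T), Φ a = Sum.inl (e₁ ⟨a, ha⟩) := by
    intro a ha
    rw [hΦ, Equiv.trans_apply, Equiv.Set.sumCompl_symm_apply_of_mem ha]
    rfl
  have hΦinr : ∀ (a : V) (ha : a ∉ T) (haS : a ∈ cs.supp),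
      Φ a = Sum.inr (e₂ ⟨a, haS⟩) := by
    intro a ha haS
    rw [hΦ, Equiv.trans_apply, Equiv.Set.sumCompl_symm_apply_of_notMem ha]
    rfl
  have hmemS : ∀ a : V, a ∉ T → a ∈ cs.supp := by
    intro a ha
    rw [← hTc]
    exact ha
  -- adjacency facts
  have F2 : ∀ a b : V, a ∈ cs.supp → b ∈ cs.supp →
      (G.Adj a b ↔ a ≠ b ∧ (a = v ∨ b = v)) := by
    intro a b haS hbS
    constructor
    · intro h
      exact ⟨h.ne, hinc a b h haS⟩
    · rintro ⟨hne, (rfl | rfl)⟩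
      · rw [hsupp] at hbS
        rcases hbS with rfl | hbN
        · exact absurd rfl hne
        · exact hbN
      · rw [hsupp] at haS
        rcases haS with rfl | haN
        · exact absurd rfl hne
        · exact haN.symm
  have F1 : ∀ a b : V, a ∈ T → b ∈ T →
      (G.Adj a b ↔ a ≠ b ∧ G.connectedComponentMk a = G.connectedComponentMk b) := by
    intro a b ha hb
    constructor
    · intro h
      exact ⟨h.ne, ConnectedComponent.eq.2 h.reachable⟩
    · rintro ⟨hne, heq⟩
      obtain ⟨p, qq, r, h1, h2, h3, hs⟩ := hothers (G.connectedComponentMk a) ha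
      refine tri_adj h1 h2 h3 hs ?_ ?_ hne
      · exact (ConnectedComponent.mem_supp_iff _ _).2 rfl
      · exact (ConnectedComponent.mem_supp_iff _ _).2 heq.symm
  refine ⟨k, m, ?_, ⟨⟨Φ, ?_⟩⟩⟩
  · have hcV := Fintype.card_congr Φ
    simp only [Fintype.card_sum, Fintype.card_prod, Fintype.card_fin] at hcV
    rw [hcV]; ring
  · intro a b
    by_cases ha : a ∈ T <;> by_cases hb : b ∈ T
    · rw [hΦinl a ha, hΦinl b hb]
      have hsum : (triangleUnion k ⊕g _root_.starGraph m).Adj (Sum.inl (e₁ ⟨a, ha⟩))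
          (Sum.inl (e₁ ⟨b, hb⟩)) ↔ (triangleUnion k).Adj (e₁ ⟨a, ha⟩) (e₁ ⟨b, hb⟩) :=
        Iff.rfl
      rw [hsum, triangleUnion_adj, F1 a b ha hb]
      constructor
      · rintro ⟨hne, hfst⟩
        have hPa := P1 (⟨a, ha⟩ : ↥T)
        have hPb := P1 (⟨b, hb⟩ : ↥T)
        rw [hPa, hPb] at hfst
        have hfteq : fT ⟨a, ha⟩ = fT ⟨b, hb⟩ := hΓ.injective hfst
        have hmk : G.connectedComponentMk a = G.connectedComponentMk b :=
          congrArg Subtype.val hfteq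
        refine ⟨?_, hmk⟩
        intro h
        exact hne (congrArg e₁ (Subtype.ext h))
      · rintro ⟨hne, hmk⟩
        constructor
        · intro h
          have := e₁.injective h
          exact hne (congrArg Subtype.val this)
        · have hPa := P1 (⟨a, ha⟩ : ↥T)
          have hPb := P1 (⟨b, hb⟩ : ↥T)
          rw [hPa, hPb]
          congr 1
          exact Subtype.ext hmk
    · have hbS := hmemS b hb
      rw [hΦinl a ha, hΦinr b hb hbS]
      have hsum : ¬ (triangleUnion k ⊕g _root_.starGraph m).Adj (Sum.inl (e₁ ⟨a, ha⟩))
          (Sum.inr (e₂ ⟨b, hbS⟩)) := by simp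
      constructor
      · intro h; exact absurd h hsum
      · intro h
        exfalso
        apply ha
        show G.connectedComponentMk a = cs
        rw [← (ConnectedComponent.mem_supp_iff _ _).1 hbS]
        exact ConnectedComponent.eq.2 h.reachable
    · have haS := hmemS a ha
      rw [hΦinr a ha haS, hΦinl b hb]
      have hsum : ¬ (triangleUnion k ⊕g _root_.starGraph m).Adj (Sum.inr (e₂ ⟨a, haS⟩))
          (Sum.inl (e₁ ⟨b, hb⟩)) := by simp
      constructor
      · intro h; exact absurd h hsum
      · intro h
        exfalso
        apply hb
        show G.connectedComponentMk b = cs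
        rw [← (ConnectedComponent.mem_supp_iff _ _).1 haS]
        exact ConnectedComponent.eq.2 h.symm.reachable
    · have haS := hmemS a ha
      have hbS := hmemS b hb
      rw [hΦinr a ha haS, hΦinr b hb hbS]
      have hsum : (triangleUnion k ⊕g _root_.starGraph m).Adj (Sum.inr (e₂ ⟨a, haS⟩))
          (Sum.inr (e₂ ⟨b, hbS⟩)) ↔ (_root_.starGraph m).Adj (e₂ ⟨a, haS⟩) (e₂ ⟨b, hbS⟩) :=
        Iff.rfl
      rw [hsum, _root_.starGraph_adj, F2 a b haS hbS, P2, P2]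
      constructor
      · rintro ⟨hne, hor⟩
        refine ⟨fun h => hne (congrArg e₂ (Subtype.ext h)), hor⟩
      · rintro ⟨hne, hor⟩
        refine ⟨fun h => hne (congrArg Subtype.val (e₂.injective h)), hor⟩
end ISO

/-- A `P_4`-free graph on `n = 3t + 2` vertices (`t ≥ 1`) has at
most `3t + 1` edges, with equality iff it is the disjoint union of `t` triangles and
a single edge `K_2`, or, for some `0 ≤ ℓ ≤ t - 1`, the disjoint union of `t - ℓ - 1`
triangles and the star `K_{1, 3ℓ+4}`. -/
theorem P4_free_extremal_3t_add_two (t : ℕ) (ht : 1 ≤ t)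
    (G : SimpleGraph (Fin (3 * t + 2)))
    (hfree : ¬ CopyIn (pathGraph 4) G) :
    G.edgeSet.ncard ≤ 3 * t + 1 ∧
      (G.edgeSet.ncard = 3 * t + 1 ↔
        Nonempty (G ≃g (triangleUnion t ⊕g (⊤ : SimpleGraph (Fin 2)))) ∨
        ∃ ℓ : ℕ, ℓ ≤ t - 1 ∧
          Nonempty (G ≃g (triangleUnion (t - ℓ - 1) ⊕g _root_.starGraph (3 * ℓ + 4)))) := by
  classical
  have hP4 := P4free_adj hfree
  have hcount := count_P4free G hP4
  rw [Fintype.card_fin] at hcount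
  letI : Fintype G.ConnectedComponent := Fintype.ofFinite _
  have hge1 : 1 ≤ Nat.card {c : G.ConnectedComponent // ¬ IsTriComp G c} := by
    by_contra hcon
    push_neg at hcon
    have h0 : Nat.card {c : G.ConnectedComponent // ¬ IsTriComp G c} = 0 := by omega
    have hall : ∀ c : G.ConnectedComponent, IsTriComp G c := by
      intro c
      by_contra hc
      have hne : Nonempty {c : G.ConnectedComponent // ¬ IsTriComp G c} := ⟨⟨c, hc⟩⟩
      have := Nat.card_pos (α := {c : G.ConnectedComponent // ¬ IsTriComp G c})
      omega
    have hdvd : (3 : ℕ) ∣ Fintype.card (Fin (3 * t + 2)) := by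
      rw [card_V_eq_sum (G := G)]
      have h3 : ∀ c : G.ConnectedComponent,
          (Finset.univ.filter (fun v => G.connectedComponentMk v = c)).card = 3 := by
        intro c
        have hfil : Finset.univ.filter (fun v => G.connectedComponentMk v = c)
            = c.supp.toFinset := by
          ext x; simp [ConnectedComponent.mem_supp_iff]
        rw [hfil, ← Set.ncard_eq_toFinset_card']
        exact card_supp_tri (hall c)
      rw [Finset.sum_congr rfl (fun c _ => h3 c)]
      rw [Finset.sum_const, smul_eq_mul]
      exact dvd_mul_left 3 _
    rw [Fintype.card_fin] at hdvd
    omega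
  refine ⟨by omega, ?_, ?_⟩
  · intro he
    have h1 : Nat.card {c : G.ConnectedComponent // ¬ IsTriComp G c} = 1 := by omega
    rw [Nat.card_eq_one_iff_unique] at h1
    obtain ⟨hsub, ⟨⟨cs, hcs⟩⟩⟩ := h1
    have hothers : ∀ c, c ≠ cs → IsTriComp G c := by
      intro c hc
      by_contra hcT
      have : (⟨c, hcT⟩ : {c : G.ConnectedComponent // ¬ IsTriComp G c})
          = ⟨cs, hcs⟩ := Subsingleton.elim _ _
      exact hc (congrArg Subtype.val this)
    obtain ⟨k, m, hcard, ⟨iso⟩⟩ := iso_structure G hP4 cs hcs hothers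
    rw [Fintype.card_fin] at hcard
    rcases Nat.lt_or_ge m 2 with hm2 | hm2
    · left
      have hm1 : m = 1 := by omega
      have hkt : k = t := by omega
      subst hm1
      subst hkt
      exact ⟨starGraph_one_eq_top ▸ iso⟩
    · right
      have hm3 : m % 3 = 1 := by omega
      obtain ⟨ℓ, rfl⟩ : ∃ ℓ, m = 3 * ℓ + 4 := ⟨(m - 4) / 3, by omega⟩
      refine ⟨ℓ, by omega, ?_⟩
      obtain rfl : t - ℓ - 1 = k := by omega
      exact ⟨iso⟩
  · rintro (h | ⟨ℓ, hℓ, h⟩) <;> obtain ⟨iso⟩ := h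
    · rw [ncard_eq_of_iso iso, ncard_edges_TU_K2]
    · rw [ncard_eq_of_iso iso, ncard_edges_TU_star]
      omega
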